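/- arXiv:1204.6353 — 6 statements merged into one kernel-verified Lean document; each statement's English description precedes it below -/
import Mathlib

section
/- For each r in {0,...,R}, the vector u_r⁰ with components u_r⁰(k) = C(r,k)·(1-d)^k·d^{r-k} for 0 ≤ k ≤ r and u_r⁰(k) = 0 for k > r is a right eigenvector of M0 with eigenvalue r(1-d), i.e. M0 · u_r⁰ = r(1-d) · u_r⁰; moreover its components sum to 1, so u_r⁰ is the binomial probability distribution binom(·; r, 1-d) on {0,...,R}. -/
/-- For each `r ∈ {0,…,R}`, the vector `u_r⁰` with components
`u_r⁰(k) = C(r,k)(1-d)^k d^(r-k)` for `k ≤ r` and `0` for `k > r` is a right eigenvector of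
`M0` with eigenvalue `r(1-d)`, and its components sum to `1` (so it is the binomial
distribution `binom(·; r, 1-d)` on `{0,…,R}`). -/
theorem right_eigenvector_M0 (R : ℕ) (hR : 1 ≤ R) (d : ℝ) (hd0 : 0 ≤ d) (hd1 : d ≤ 1)
    (M0 : Matrix (Fin (R + 1)) (Fin (R + 1)) ℝ)
    (hM0 : ∀ i j, M0 i j =
      if (i : ℕ) = (j : ℕ) then (j : ℝ) * (1 - d)
      else if (i : ℕ) + 1 = (j : ℕ) then (j : ℝ) * d
      else 0)
    (r : Fin (R + 1)) (u : Fin (R + 1) → ℝ)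
    (hu : ∀ k, u k =
      if (k : ℕ) ≤ (r : ℕ) then
        ((r : ℕ).choose (k : ℕ) : ℝ) * (1 - d) ^ (k : ℕ) * d ^ ((r : ℕ) - (k : ℕ))
      else 0) :
    M0.mulVec u = ((r : ℝ) * (1 - d)) • u ∧ ∑ k, u k = 1 := by
  constructor
  · funext i
    have key : ∀ j, M0 i j * u j =
        (if i = j then ((j : ℕ) : ℝ) * (1 - d) * u j else 0) +
        (if (i : ℕ) + 1 = (j : ℕ) then ((j : ℕ) : ℝ) * d * u j else 0) := by
      intro j
      rw [hM0]
      by_cases h1 : (i : ℕ) = (j : ℕ)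
      · have hij : i = j := Fin.ext h1
        simp [hij, mul_assoc]
      · have hij : i ≠ j := fun h => h1 (by rw [h])
        by_cases h2 : (i : ℕ) + 1 = (j : ℕ)
        · simp [h1, h2, hij, mul_assoc]
        · simp [h1, h2, hij]
    have hsum : M0.mulVec u i =
        ((i : ℕ) : ℝ) * (1 - d) * u i +
        ∑ j : Fin (R + 1), (if (i : ℕ) + 1 = (j : ℕ) then ((j : ℕ) : ℝ) * d * u j else 0) := by
      simp only [Matrix.mulVec, dotProduct]
      rw [Finset.sum_congr rfl (fun j _ => key j), Finset.sum_add_distrib,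
        Finset.sum_ite_eq Finset.univ i (fun j => ((j : ℕ) : ℝ) * (1 - d) * u j),
        if_pos (Finset.mem_univ i)]
    rw [hsum]
    simp only [Pi.smul_apply, smul_eq_mul]
    by_cases hiR : (i : ℕ) + 1 ≤ R
    · set j0 : Fin (R + 1) := ⟨(i : ℕ) + 1, by omega⟩ with hj0
      have hcond : ∀ j : Fin (R + 1), ((i : ℕ) + 1 = (j : ℕ)) ↔ j0 = j := by
        intro j
        constructor
        · intro h; exact Fin.ext h
        · intro h; rw [← h]
      have : (∑ j : Fin (R + 1), (if (i : ℕ) + 1 = (j : ℕ) then ((j : ℕ) : ℝ) * d * u j else 0)) =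
          ((j0 : ℕ) : ℝ) * d * u j0 := by
        rw [Finset.sum_congr rfl (fun j _ => by rw [if_congr (hcond j) rfl rfl]),
          Finset.sum_ite_eq Finset.univ j0 (fun j => ((j : ℕ) : ℝ) * d * u j),
          if_pos (Finset.mem_univ j0)]
      rw [this]
      have hj0v : ((j0 : ℕ) : ℝ) = ((i : ℕ) : ℝ) + 1 := by simp [hj0]
      rcases lt_trichotomy (i : ℕ) (r : ℕ) with hlt | heq | hgt
      · have hui : u i = ((r : ℕ).choose (i : ℕ) : ℝ) * (1 - d) ^ (i : ℕ) * d ^ ((r : ℕ) - (i : ℕ)) := by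
          rw [hu]; simp [Nat.le_of_lt hlt]
        have huj : u j0 = ((r : ℕ).choose ((i : ℕ) + 1) : ℝ) * (1 - d) ^ ((i : ℕ) + 1) * d ^ ((r : ℕ) - ((i : ℕ) + 1)) := by
          rw [hu]; simp [hj0, Nat.succ_le_of_lt hlt]
        have hch : ((r : ℕ).choose ((i : ℕ) + 1) * ((i : ℕ) + 1) : ℕ) =
            (r : ℕ).choose (i : ℕ) * ((r : ℕ) - (i : ℕ)) := Nat.choose_succ_right_eq _ _
        have hchR : (((r : ℕ).choose ((i : ℕ) + 1) : ℝ)) * (((i : ℕ) : ℝ) + 1) =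
            ((r : ℕ).choose (i : ℕ) : ℝ) * (((r : ℕ) : ℝ) - ((i : ℕ) : ℝ)) := by
          have := congrArg (Nat.cast (R := ℝ)) hch
          push_cast [Nat.cast_sub (Nat.le_of_lt hlt)] at this
          exact this
        have hd' : d ^ ((r : ℕ) - (i : ℕ)) = d ^ ((r : ℕ) - ((i : ℕ) + 1)) * d := by
          rw [← pow_succ]
          congr 1
          omega
        rw [hui, huj, hj0v, hd']
        linear_combination (d * (1 - d) ^ ((i : ℕ) + 1) * d ^ ((r : ℕ) - ((i : ℕ) + 1))) * hchR
      · have hui : u i = ((r : ℕ).choose (i : ℕ) : ℝ) * (1 - d) ^ (i : ℕ) * d ^ ((r : ℕ) - (i : ℕ)) := by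
          rw [hu]; simp [heq.le]
        have huj : u j0 = 0 := by
          rw [hu]; simp [hj0]; omega
        rw [huj, heq]
        ring
      · have hui : u i = 0 := by rw [hu]; simp; omega
        have huj : u j0 = 0 := by rw [hu]; simp [hj0]; omega
        rw [hui, huj]; ring
    · have hall : (∑ j : Fin (R + 1), (if (i : ℕ) + 1 = (j : ℕ) then ((j : ℕ) : ℝ) * d * u j else 0)) = 0 := by
        apply Finset.sum_eq_zero
        intro j _
        have : ¬((i : ℕ) + 1 = (j : ℕ)) := by omega
        simp [this]
      rw [hall, add_zero]
      rcases eq_or_lt_of_le (Fin.is_le r) with h1 | h1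
      · have : (i : ℕ) = (r : ℕ) := by omega
        rw [this]
      · have : (r : ℕ) < (i : ℕ) := by omega
        have hui : u i = 0 := by rw [hu]; simp; omega
        rw [hui]; ring
  · have hg : ∀ k : Fin (R + 1), u k = (fun n : ℕ =>
        if n ≤ (r : ℕ) then ((r : ℕ).choose n : ℝ) * (1 - d) ^ n * d ^ ((r : ℕ) - n) else 0) (k : ℕ) := by
      intro k; rw [hu]
    calc ∑ k, u k = ∑ n ∈ Finset.range (R + 1),
          (if n ≤ (r : ℕ) then ((r : ℕ).choose n : ℝ) * (1 - d) ^ n * d ^ ((r : ℕ) - n) else 0) := by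
          rw [Finset.sum_congr rfl (fun k _ => hg k)]
          exact Fin.sum_univ_eq_sum_range (fun n =>
            if n ≤ (r : ℕ) then ((r : ℕ).choose n : ℝ) * (1 - d) ^ n * d ^ ((r : ℕ) - n) else 0) (R + 1)
      _ = ∑ n ∈ Finset.range ((r : ℕ) + 1),
          (if n ≤ (r : ℕ) then ((r : ℕ).choose n : ℝ) * (1 - d) ^ n * d ^ ((r : ℕ) - n) else 0) := by
          refine (Finset.sum_subset ?_ ?_).symm
          · intro x hx
            simp only [Finset.mem_range] at *
            have := Fin.is_le r
            omega
          · intro x _ hx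
            simp only [Finset.mem_range] at hx
            have : ¬ (x ≤ (r : ℕ)) := by omega
            simp [this]
      _ = ∑ n ∈ Finset.range ((r : ℕ) + 1),
          (1 - d) ^ n * d ^ ((r : ℕ) - n) * ((r : ℕ).choose n : ℝ) := by
          refine Finset.sum_congr rfl fun n hn => ?_
          simp only [Finset.mem_range] at hn
          have : n ≤ (r : ℕ) := by omega
          simp [this]; ring
      _ = ((1 - d) + d) ^ (r : ℕ) := (add_pow (1 - d) d (r : ℕ)).symm
      _ = 1 := by norm_num
end

section
/- The first-order perturbation coefficient of the malthusian parameter satisfies m¹ = (v_R⁰)ᵀ · P · u_R⁰ = R(R-1)d/(1-d), where v_R⁰ is the vector whose only nonzero component is v_R⁰(R) = 1/(1-d)^R and u_R⁰ is the vector with components u_R⁰(k) = C(R,k)·(1-d)^k·d^{R-k}. -/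
open Matrix

/-- The first-order perturbation coefficient of the malthusian parameter:
`m¹ = (v_R⁰)ᵀ · P · u_R⁰ = R(R-1)d/(1-d)`. -/
theorem first_order_malthusian (R : ℕ) (hR : 1 ≤ R) (d : ℝ) (hd0 : 0 < d) (hd1 : d < 1)
    (P : Matrix (Fin (R + 1)) (Fin (R + 1)) ℝ)
    (hP : ∀ i j, P i j =
      if (i : ℕ) = (j : ℕ) ∧ 1 ≤ (j : ℕ) ∧ (j : ℕ) ≤ R - 1 then -(j : ℝ)
      else if (i : ℕ) = (j : ℕ) + 1 ∧ 1 ≤ (j : ℕ) ∧ (j : ℕ) ≤ R - 1 then (j : ℝ)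
      else 0)
    (v u : Fin (R + 1) → ℝ)
    (hv : ∀ k, v k = if (k : ℕ) = R then 1 / (1 - d) ^ R else 0)
    (hu : ∀ k, u k = (R.choose (k : ℕ) : ℝ) * (1 - d) ^ (k : ℕ) * d ^ (R - (k : ℕ))) :
    v ⬝ᵥ P.mulVec u = (R : ℝ) * ((R : ℝ) - 1) * d / (1 - d) := by
  have h1d : (1:ℝ) - d ≠ 0 := by linarith
  have hRlt : R < R + 1 := by omega
  have hR1lt : R - 1 < R + 1 := by omega
  have hvsum : v ⬝ᵥ P.mulVec u = v ⟨R, hRlt⟩ * P.mulVec u ⟨R, hRlt⟩ := by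
    rw [dotProduct]
    apply Finset.sum_eq_single
    · intro i _ hi
      have : (i : ℕ) ≠ R := fun h => hi (Fin.ext h)
      rw [hv, if_neg this, zero_mul]
    · intro h; exact absurd (Finset.mem_univ _) h
  rw [hvsum]
  have hmul : P.mulVec u ⟨R, hRlt⟩ = P ⟨R, hRlt⟩ ⟨R - 1, hR1lt⟩ * u ⟨R - 1, hR1lt⟩ := by
    simp only [Matrix.mulVec, dotProduct]
    apply Finset.sum_eq_single
    · intro j _ hj
      have hjv : (j : ℕ) ≠ R - 1 := fun h => hj (Fin.ext (by simpa using h))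
      rw [hP]
      simp only [Fin.val_mk]
      split_ifs with h1 h2
      · exfalso; omega
      · exfalso; omega
      · rw [zero_mul]
    · intro h; exact absurd (Finset.mem_univ _) h
  rw [hmul]
  rcases Nat.lt_or_ge R 2 with hR2 | hR2
  · -- R = 1
    have hR1 : R = 1 := by omega
    subst hR1
    rw [hP]
    norm_num
  · -- R ≥ 2
    rw [hP, hv, hu]
    simp only [Fin.val_mk]
    rw [if_pos trivial]
    rw [if_neg (by omega), if_pos (by omega)]
    have hch : R.choose (R - 1) = R := by
      rw [Nat.choose_symm (by omega : 1 ≤ R), Nat.choose_one_right]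
    have hsub : R - (R - 1) = 1 := by omega
    rw [hch, hsub]
    have hpow : (1 - d) ^ R = (1 - d) ^ (R - 1) * (1 - d) := by
      rw [← pow_succ]; congr 1; omega
    have hcast : ((R - 1 : ℕ) : ℝ) = (R : ℝ) - 1 := by
      push_cast [Nat.cast_sub hR]; ring
    rw [hpow, hcast, pow_one]
    have hpne : (1 - d) ^ (R - 1) ≠ 0 := pow_ne_zero _ h1d
    field_simp
end

section
/- The scalar (v_R⁰)ᵀ · P · u_{R-1}⁰ equals (R-1)/(1-d); consequently the first-order eigenvector perturbation coefficient A¹_{R,R-1} = (v_R⁰)ᵀ P u_{R-1}⁰ / (λ_R⁰ - λ_{R-1}⁰) equals (R-1)/(1-d)², where λ_r⁰ = r(1-d). Here v_R⁰ is the vector whose only nonzero component is v_R⁰(R) = 1/(1-d)^R and u_{R-1}⁰ is the vector with components u_{R-1}⁰(k) = C(R-1,k)·(1-d)^k·d^{R-1-k} for 0 ≤ k ≤ R-1 and u_{R-1}⁰(R) = 0. -/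
open Matrix

/-- `(v_R⁰)ᵀ · P · u_{R-1}⁰ = (R-1)/(1-d)`, and consequently the first-order eigenvector
perturbation coefficient `A¹_{R,R-1} = (v_R⁰)ᵀ P u_{R-1}⁰ / (λ_R⁰ - λ_{R-1}⁰)` equals
`(R-1)/(1-d)²`, where `λ_r⁰ = r(1-d)`. -/
theorem eigenvector_perturbation_coeff (R : ℕ) (hR : 2 ≤ R) (d : ℝ) (hd0 : 0 < d) (hd1 : d < 1)
    (P : Matrix (Fin (R + 1)) (Fin (R + 1)) ℝ)
    (hP : ∀ i j, P i j =
      if (i : ℕ) = (j : ℕ) ∧ 1 ≤ (j : ℕ) ∧ (j : ℕ) ≤ R - 1 then -(j : ℝ)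
      else if (i : ℕ) = (j : ℕ) + 1 ∧ 1 ≤ (j : ℕ) ∧ (j : ℕ) ≤ R - 1 then (j : ℝ)
      else 0)
    (v u : Fin (R + 1) → ℝ)
    (hv : ∀ k, v k = if (k : ℕ) = R then 1 / (1 - d) ^ R else 0)
    (hu : ∀ k, u k =
      if (k : ℕ) ≤ R - 1 then
        ((R - 1).choose (k : ℕ) : ℝ) * (1 - d) ^ (k : ℕ) * d ^ (R - 1 - (k : ℕ))
      else 0) :
    v ⬝ᵥ P.mulVec u = ((R : ℝ) - 1) / (1 - d) ∧
    (v ⬝ᵥ P.mulVec u) / ((R : ℝ) * (1 - d) - ((R : ℝ) - 1) * (1 - d))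
      = ((R : ℝ) - 1) / (1 - d) ^ 2 := by
  have hne : (1 : ℝ) - d ≠ 0 := by linarith
  set iR : Fin (R + 1) := ⟨R, by omega⟩ with hiR
  set jR : Fin (R + 1) := ⟨R - 1, by omega⟩ with hjR
  have h1 : v ⬝ᵥ P.mulVec u = v iR * P.mulVec u iR := by
    rw [dotProduct]
    apply Finset.sum_eq_single
    · intro b _ hb
      have : (b : ℕ) ≠ R := by
        intro h; apply hb; apply Fin.ext; simpa using h
      rw [hv b, if_neg this, zero_mul]
    · intro h; exact absurd (Finset.mem_univ iR) h
  have h2 : P.mulVec u iR = P iR jR * u jR := by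
    rw [mulVec, dotProduct]
    apply Finset.sum_eq_single
    · intro b _ hb
      have hbne : (b : ℕ) ≠ R - 1 := by
        intro h; apply hb; apply Fin.ext; simpa using h
      have : P iR b = 0 := by
        rw [hP]
        have hiRv : (iR : ℕ) = R := rfl
        rw [if_neg, if_neg]
        · rintro ⟨h1, h2, h3⟩; omega
        · rintro ⟨h1, h2, h3⟩; omega
      rw [this, zero_mul]
    · intro h; exact absurd (Finset.mem_univ jR) h
  have hPval : P iR jR = ((R : ℝ) - 1) := by
    rw [hP]
    have hiRv : (iR : ℕ) = R := rfl
    have hjRv : (jR : ℕ) = R - 1 := rfl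
    rw [if_neg, if_pos]
    · rw [hjRv]
      push_cast [Nat.cast_sub (by omega : 1 ≤ R)]
      ring
    · exact ⟨by omega, by omega, by omega⟩
    · rintro ⟨h1, h2, h3⟩; omega
  have huval : u jR = (1 - d) ^ (R - 1) := by
    rw [hu]
    have hjRv : (jR : ℕ) = R - 1 := rfl
    rw [if_pos (by omega)]
    rw [hjRv, Nat.choose_self, Nat.sub_self]
    push_cast; ring
  have hvval : v iR = 1 / (1 - d) ^ R := by
    rw [hv]; exact if_pos rfl
  have hpow : (1 - d) ^ R = (1 - d) ^ (R - 1) * (1 - d) := by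
    rw [← pow_succ]
    congr 1
    omega
  have hmain : v ⬝ᵥ P.mulVec u = ((R : ℝ) - 1) / (1 - d) := by
    rw [h1, h2, hPval, huval, hvval, hpow]
    have hpne : (1 - d) ^ (R - 1) ≠ 0 := pow_ne_zero _ hne
    field_simp
  refine ⟨hmain, ?_⟩
  rw [hmain]
  have : (R : ℝ) * (1 - d) - ((R : ℝ) - 1) * (1 - d) = 1 - d := by ring
  rw [this, div_div, ← pow_two]
end

section
/- The second-order perturbation coefficient of the malthusian parameter satisfies m² = [(v_{R-1}⁰)ᵀ P u_R⁰]·[(v_R⁰)ᵀ P u_{R-1}⁰]/(1-d) = -R(R-1)²(1 + Rd/2)·d/(1-d)³, where v_R⁰ is the vector whose only nonzero component is v_R⁰(R) = 1/(1-d)^R, v_{R-1}⁰ is the vector whose only nonzero components are v_{R-1}⁰(R-1) = 1/(1-d)^{R-1} and v_{R-1}⁰(R) = -dR/(1-d)^R, u_R⁰ is the vector with components u_R⁰(k) = C(R,k)·(1-d)^k·d^{R-k}, and u_{R-1}⁰ is the vector with components u_{R-1}⁰(k) = C(R-1,k)·(1-d)^k·d^{R-1-k} for 0 ≤ k ≤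 R-1 and u_{R-1}⁰(R) = 0. -/
open Matrix

/-- The second-order perturbation coefficient of the malthusian parameter:
`m² = [(v_{R-1}⁰)ᵀ P u_R⁰]·[(v_R⁰)ᵀ P u_{R-1}⁰]/(1-d) = -R(R-1)²(1 + Rd/2)·d/(1-d)³`. -/
theorem second_order_malthusian (R : ℕ) (hR : 2 ≤ R) (d : ℝ) (hd0 : 0 < d) (hd1 : d < 1)
    (P : Matrix (Fin (R + 1)) (Fin (R + 1)) ℝ)
    (hP : ∀ i j, P i j =
      if (i : ℕ) = (j : ℕ) ∧ 1 ≤ (j : ℕ) ∧ (j : ℕ) ≤ R - 1 then -(j : ℝ)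
      else if (i : ℕ) = (j : ℕ) + 1 ∧ 1 ≤ (j : ℕ) ∧ (j : ℕ) ≤ R - 1 then (j : ℝ)
      else 0)
    (vR vRm1 uR uRm1 : Fin (R + 1) → ℝ)
    (hvR : ∀ k, vR k = if (k : ℕ) = R then 1 / (1 - d) ^ R else 0)
    (hvRm1 : ∀ k, vRm1 k =
      if (k : ℕ) = R - 1 then 1 / (1 - d) ^ (R - 1)
      else if (k : ℕ) = R then -(d * (R : ℝ)) / (1 - d) ^ R
      else 0)
    (huR : ∀ k, uR k = (R.choose (k : ℕ) : ℝ) * (1 - d) ^ (k : ℕ) * d ^ (R - (k : ℕ)))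
    (huRm1 : ∀ k, uRm1 k =
      if (k : ℕ) ≤ R - 1 then
        ((R - 1).choose (k : ℕ) : ℝ) * (1 - d) ^ (k : ℕ) * d ^ (R - 1 - (k : ℕ))
      else 0) :
    (vRm1 ⬝ᵥ P.mulVec uR) * (vR ⬝ᵥ P.mulVec uRm1) / (1 - d)
      = -((R : ℝ) * ((R : ℝ) - 1) ^ 2 * (1 + (R : ℝ) * d / 2) * d / (1 - d) ^ 3) := by
  obtain ⟨e, rfl⟩ : ∃ e, R = e + 2 := ⟨R - 2, by omega⟩
  have hx : (1 : ℝ) - d ≠ 0 := by linarith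
  have pa : e + 1 < e + 2 + 1 := by omega
  have pb : e + 2 < e + 2 + 1 := by omega
  have pc : e < e + 2 + 1 := by omega
  have hav : ((⟨e + 1, pa⟩ : Fin (e + 2 + 1)) : ℕ) = e + 1 := rfl
  have hbv : ((⟨e + 2, pb⟩ : Fin (e + 2 + 1)) : ℕ) = e + 2 := rfl
  have hcv : ((⟨e, pc⟩ : Fin (e + 2 + 1)) : ℕ) = e := rfl
  -- values of the vectors
  have hvRb : vR ⟨e + 2, pb⟩ = 1 / (1 - d) ^ (e + 2) := by
    rw [hvR, if_pos (by rw [hbv])]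
  have hvRm1a : vRm1 ⟨e + 1, pa⟩ = 1 / (1 - d) ^ (e + 1) := by
    rw [hvRm1, if_pos (by rw [hav]; omega), show e + 2 - 1 = e + 1 from rfl]
  have hvRm1b : vRm1 ⟨e + 2, pb⟩ = -(d * ((e : ℝ) + 2)) / (1 - d) ^ (e + 2) := by
    rw [hvRm1, if_neg (by rw [hbv]; omega), if_pos (by rw [hbv])]
    push_cast; ring_nf
  have huRc : uR ⟨e, pc⟩ = ((e : ℝ) + 2) * ((e : ℝ) + 1) / 2 * (1 - d) ^ e * d ^ 2 := by
    rw [huR]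
    have h1 : (e + 2).choose e = (e + 2).choose 2 := Nat.choose_symm (show 2 ≤ e + 2 by omega)
    have h2 : ((e + 2).choose 2 : ℝ) = ((e : ℝ) + 2) * ((e : ℝ) + 1) / 2 := by
      rw [Nat.cast_choose_two]; push_cast; ring
    rw [hcv, h1, h2, show e + 2 - e = 2 by omega]
  have huRa : uR ⟨e + 1, pa⟩ = ((e : ℝ) + 2) * (1 - d) ^ (e + 1) * d := by
    rw [huR]
    have h1 : (e + 2).choose (e + 1) = (e + 2).choose 1 := Nat.choose_symm (show 1 ≤ e + 2 by omega)
    rw [hav, h1, Nat.choose_one_right, show e + 2 - (e + 1) = 1 by omega]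
    push_cast; ring
  have huRm1a : uRm1 ⟨e + 1, pa⟩ = (1 - d) ^ (e + 1) := by
    rw [huRm1, if_pos (by rw [hav]; omega), hav,
      show e + 2 - 1 = e + 1 from rfl, Nat.choose_self, Nat.sub_self]
    norm_num
  -- values of P
  have hPac : P ⟨e + 1, pa⟩ ⟨e, pc⟩ = (e : ℝ) := by
    rw [hP]
    rcases Nat.eq_zero_or_pos e with h | h
    · rw [if_neg (by rw [hav, hcv]; omega), if_neg (by rw [hcv]; omega), h]
      norm_num
    · rw [if_neg (by rw [hav, hcv]; omega), if_pos (by rw [hav, hcv]; omega), hcv]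
  have hPaa : P ⟨e + 1, pa⟩ ⟨e + 1, pa⟩ = -((e : ℝ) + 1) := by
    rw [hP, if_pos (by rw [hav]; omega), hav]
    push_cast; ring
  have hPba : P ⟨e + 2, pb⟩ ⟨e + 1, pa⟩ = (e : ℝ) + 1 := by
    rw [hP, if_neg (by rw [hav, hbv]; omega), if_pos (by rw [hav, hbv]; omega), hav]
    push_cast; ring
  -- zero lemmas
  have hPzeroA : ∀ j : Fin (e + 2 + 1), j ≠ ⟨e, pc⟩ → j ≠ ⟨e + 1, pa⟩ →
      P ⟨e + 1, pa⟩ j = 0 := by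
    intro j hjc hja
    have hjc' : (j : ℕ) ≠ e := fun h => hjc (Fin.ext (by rw [hcv, h]))
    have hja' : (j : ℕ) ≠ e + 1 := fun h => hja (Fin.ext (by rw [hav, h]))
    rw [hP, if_neg (by rw [hav]; omega), if_neg (by rw [hav]; omega)]
  have hPzeroB : ∀ j : Fin (e + 2 + 1), j ≠ ⟨e + 1, pa⟩ → P ⟨e + 2, pb⟩ j = 0 := by
    intro j hja
    have hja' : (j : ℕ) ≠ e + 1 := fun h => hja (Fin.ext (by rw [hav, h]))
    rw [hP, if_neg (by rw [hbv]; omega), if_neg (by rw [hbv]; omega)]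
  have hab : (⟨e + 1, pa⟩ : Fin (e + 2 + 1)) ≠ ⟨e + 2, pb⟩ := by
    intro h; have := congrArg Fin.val h; rw [hav, hbv] at this; omega
  have hca : (⟨e, pc⟩ : Fin (e + 2 + 1)) ≠ ⟨e + 1, pa⟩ := by
    intro h; have := congrArg Fin.val h; rw [hav, hcv] at this; omega
  -- mulVec values
  have hmA : P.mulVec uR ⟨e + 1, pa⟩
      = P ⟨e + 1, pa⟩ ⟨e, pc⟩ * uR ⟨e, pc⟩ + P ⟨e + 1, pa⟩ ⟨e + 1, pa⟩ * uR ⟨e + 1, pa⟩ := by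
    rw [mulVec]
    refine Fintype.sum_eq_add _ _ hca ?_
    intro j hj
    show P ⟨e + 1, pa⟩ j * uR j = 0
    rw [hPzeroA j hj.1 hj.2, zero_mul]
  have hmB1 : P.mulVec uRm1 ⟨e + 2, pb⟩ = P ⟨e + 2, pb⟩ ⟨e + 1, pa⟩ * uRm1 ⟨e + 1, pa⟩ := by
    rw [mulVec]
    refine Fintype.sum_eq_single _ ?_
    intro j hj
    show P ⟨e + 2, pb⟩ j * uRm1 j = 0
    rw [hPzeroB j hj, zero_mul]
  have hmB2 : P.mulVec uR ⟨e + 2, pb⟩ = P ⟨e + 2, pb⟩ ⟨e + 1, pa⟩ * uR ⟨e + 1, pa⟩ := by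
    rw [mulVec]
    refine Fintype.sum_eq_single _ ?_
    intro j hj
    show P ⟨e + 2, pb⟩ j * uR j = 0
    rw [hPzeroB j hj, zero_mul]
  -- dot products
  have hvRm1zero : ∀ k : Fin (e + 2 + 1), k ≠ ⟨e + 1, pa⟩ → k ≠ ⟨e + 2, pb⟩ → vRm1 k = 0 := by
    intro k h1 h2
    have h1' : (k : ℕ) ≠ e + 1 := fun h => h1 (Fin.ext (by rw [hav, h]))
    have h2' : (k : ℕ) ≠ e + 2 := fun h => h2 (Fin.ext (by rw [hbv, h]))
    rw [hvRm1, if_neg (by omega), if_neg (by omega)]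
  have hvRzero : ∀ k : Fin (e + 2 + 1), k ≠ ⟨e + 2, pb⟩ → vR k = 0 := by
    intro k h
    have h' : (k : ℕ) ≠ e + 2 := fun hh => h (Fin.ext (by rw [hbv, hh]))
    rw [hvR, if_neg (by omega)]
  have hD1 : vRm1 ⬝ᵥ P.mulVec uR
      = vRm1 ⟨e + 1, pa⟩ * P.mulVec uR ⟨e + 1, pa⟩
        + vRm1 ⟨e + 2, pb⟩ * P.mulVec uR ⟨e + 2, pb⟩ := by
    rw [dotProduct]
    refine Fintype.sum_eq_add _ _ hab ?_
    intro k hk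
    rw [hvRm1zero k hk.1 hk.2, zero_mul]
  have hD2 : vR ⬝ᵥ P.mulVec uRm1 = vR ⟨e + 2, pb⟩ * P.mulVec uRm1 ⟨e + 2, pb⟩ := by
    rw [dotProduct]
    refine Fintype.sum_eq_single _ ?_
    intro k hk
    rw [hvRzero k hk, zero_mul]
  rw [hD1, hD2, hmA, hmB1, hmB2, hvRm1a, hvRm1b, hvRb, hPac, hPaa, hPba, huRc, huRa, huRm1a]
  push_cast
  have hpe : (1 - d) ^ (e + 1) = (1 - d) ^ e * (1 - d) := pow_succ _ _
  have hpe2 : (1 - d) ^ (e + 2) = (1 - d) ^ e * (1 - d) ^ 2 := by ring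
  have hne : (1 - d) ^ e ≠ 0 := pow_ne_zero e hx
  rw [hpe, hpe2]
  field_simp
  ring
end

section
/- For 0 ≤ d ≤ 1, the powers M0^n converge entrywise to the zero matrix as n → ∞ if and only if R(1-d) < 1, i.e. if and only if the deleterious probability d exceeds the critical value d_c(R) = 1 - 1/R. (This is the mean-value form of the lethal mutagenesis criterion of Bull, Sanjuán and Wilke for the phenotypic model without beneficial effects: the expected population ⟨Z_n⟩ = M0^n Z_0 tends to zero for every initial population exactly when (1-d)R < 1.) -/
open Filter

/-- Mean-value form of the lethal-mutagenesis criterion for the phenotypic model with `b = 0`: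
the powers `M0ⁿ` converge entrywise to `0` as `n → ∞` if and only if `R(1-d) < 1`, i.e. if and
only if the deleterious probability `d` exceeds the critical value `d_c(R) = 1 - 1/R`. -/
theorem lethal_mutagenesis_criterion (R : ℕ) (hR : 1 ≤ R) (d : ℝ) (hd0 : 0 ≤ d) (hd1 : d ≤ 1)
    (M0 : Matrix (Fin (R + 1)) (Fin (R + 1)) ℝ)
    (hM0 : ∀ i j, M0 i j =
      if (i : ℕ) = (j : ℕ) then (j : ℝ) * (1 - d)
      else if (i : ℕ) + 1 = (j : ℕ) then (j : ℝ) * d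
      else 0) :
    ((∀ i j, Tendsto (fun n : ℕ => (M0 ^ n) i j) atTop (nhds 0)) ↔ (R : ℝ) * (1 - d) < 1) ∧
    ((R : ℝ) * (1 - d) < 1 ↔ 1 - 1 / (R : ℝ) < d) := by
  have hRpos : (0:ℝ) < R := by exact_mod_cast hR
  have h1d : (0:ℝ) ≤ 1 - d := by linarith
  have h2 : ((R : ℝ) * (1 - d) < 1 ↔ 1 - 1 / (R : ℝ) < d) := by
    rw [mul_comm, ← lt_div_iff₀ hRpos]
    exact sub_lt_comm
  refine ⟨⟨?_, ?_⟩, h2⟩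
  · -- convergence → R(1-d) < 1, via diagonal entries
    intro hconv
    by_contra hc
    push_neg at hc
    -- powers are upper triangular
    have tri : ∀ n : ℕ, ∀ i j : Fin (R+1), (j:ℕ) < (i:ℕ) → (M0 ^ n) i j = 0 := by
      intro n
      induction n with
      | zero =>
        intro i j hij
        have hne : i ≠ j := fun h => by subst h; omega
        simp [Matrix.one_apply, hne]
      | succ n ih =>
        intro i j hij
        rw [pow_succ, Matrix.mul_apply]
        apply Finset.sum_eq_zero
        intro k _
        by_cases hk : (k:ℕ) < (i:ℕ)
        · rw [ih i k hk, zero_mul]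
        · push_neg at hk
          have h1 : ¬ (k:ℕ) = (j:ℕ) := by omega
          have h2 : ¬ (k:ℕ) + 1 = (j:ℕ) := by omega
          rw [hM0, if_neg h1, if_neg h2, mul_zero]
    have diag : ∀ n : ℕ, ∀ i : Fin (R+1), (M0 ^ n) i i = ((i:ℝ) * (1 - d)) ^ n := by
      intro n
      induction n with
      | zero => intro i; simp [Matrix.one_apply]
      | succ n ih =>
        intro i
        rw [pow_succ, Matrix.mul_apply]
        rw [Finset.sum_eq_single i]
        · rw [ih i, hM0, if_pos rfl, pow_succ]
        · intro k _ hk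
          by_cases hki : (k:ℕ) < (i:ℕ)
          · rw [tri n i k hki, zero_mul]
          · have hki' : (i:ℕ) < (k:ℕ) := by
              rcases lt_or_eq_of_le (not_lt.mp hki) with h | h
              · exact h
              · exact absurd (Fin.ext h.symm) hk
            have h1 : ¬ (k:ℕ) = (i:ℕ) := by omega
            have h2 : ¬ (k:ℕ) + 1 = (i:ℕ) := by omega
            rw [hM0, if_neg h1, if_neg h2, mul_zero]
        · intro h; exact absurd (Finset.mem_univ i) h
    have hlast : ((Fin.last R : Fin (R+1)) : ℕ) = R := rfl
    have hf : ∀ n : ℕ, (1:ℝ) ≤ (M0 ^ n) (Fin.last R) (Fin.last R) := by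
      intro n
      rw [diag n, hlast]
      calc (1:ℝ) = 1 ^ n := (one_pow n).symm
        _ ≤ ((R:ℝ) * (1 - d)) ^ n := pow_le_pow_left₀ zero_le_one hc n
    have := ge_of_tendsto' (hconv (Fin.last R) (Fin.last R)) hf
    linarith
  · -- R(1-d) < 1 → convergence
    intro hc i j
    set c : ℝ := (R:ℝ) * (1 - d) with hcdef
    have hc0 : 0 ≤ c := mul_nonneg (le_of_lt hRpos) h1d
    set ε : ℝ := (1 - c) / ((R:ℝ) + 2) with hεdef
    have hR2 : (0:ℝ) < (R:ℝ) + 2 := by linarith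
    have hε0 : 0 < ε := div_pos (by linarith) hR2
    have hεne : ε ≠ 0 := ne_of_gt hε0
    have hkey : ((R:ℝ) + 2) * ε = 1 - c := by
      rw [hεdef]; field_simp
    have hε1 : ε ≤ 1 := by nlinarith
    set c' : ℝ := c + ((R:ℝ) + 1) * ε with hc'def
    have hc'0 : 0 ≤ c' := by positivity
    have hc'1 : c' < 1 := by nlinarith
    -- entries of M0 are nonneg
    have hM0nn : ∀ i j : Fin (R+1), 0 ≤ M0 i j := by
      intro i j
      rw [hM0]
      split_ifs
      · exact mul_nonneg (Nat.cast_nonneg _) h1d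
      · exact mul_nonneg (Nat.cast_nonneg _) hd0
      · exact le_refl 0
    -- rescaled matrix
    set A : Matrix (Fin (R+1)) (Fin (R+1)) ℝ :=
      Matrix.of (fun i j : Fin (R+1) => ε ^ (j:ℕ) / ε ^ (i:ℕ) * M0 i j) with hAdef
    have hAapp : ∀ i j : Fin (R+1), A i j = ε ^ (j:ℕ) / ε ^ (i:ℕ) * M0 i j := fun i j => rfl
    have hAnn : ∀ i j : Fin (R+1), 0 ≤ A i j := by
      intro i j
      exact mul_nonneg (div_nonneg (by positivity) (by positivity)) (hM0nn i j)
    -- conjugation identity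
    have conj : ∀ n : ℕ, ∀ i j : Fin (R+1),
        (A ^ n) i j = ε ^ (j:ℕ) / ε ^ (i:ℕ) * (M0 ^ n) i j := by
      intro n
      induction n with
      | zero =>
        intro i j
        by_cases h : i = j
        · subst h; simp [Matrix.one_apply, div_self (pow_ne_zero _ hεne)]
        · simp [Matrix.one_apply, h]
      | succ n ih =>
        intro i j
        rw [pow_succ, pow_succ, Matrix.mul_apply, Matrix.mul_apply, Finset.mul_sum]
        apply Finset.sum_congr rfl
        intro k _
        rw [ih i k, hAapp k j]
        field_simp
    -- row sums of A bounded by c'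
    have rowsum : ∀ i : Fin (R+1), (∑ j : Fin (R+1), A i j) ≤ c' := by
      intro i
      have hg : ∀ j : Fin (R+1), A i j ≤
          (if j = i then c else 0) + (if (i:ℕ) + 1 = (j:ℕ) then ((R:ℝ)+1) * ε else 0) := by
        intro j
        rw [hAapp, hM0]
        by_cases h1 : (i:ℕ) = (j:ℕ)
        · have hji : j = i := Fin.ext h1.symm
          have h2 : ¬ ((i:ℕ) + 1 = (j:ℕ)) := by omega
          rw [if_pos h1, if_pos hji, if_neg h2, add_zero, hji, div_self (pow_ne_zero _ hεne),
            one_mul]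
          have hjR : ((i:ℕ):ℝ) ≤ (R:ℝ) := by
            exact_mod_cast Nat.le_of_lt_succ i.isLt
          calc ((i:ℕ):ℝ) * (1 - d) ≤ (R:ℝ) * (1 - d) := by nlinarith
            _ = c := rfl
        · by_cases h2 : (i:ℕ) + 1 = (j:ℕ)
          · have hji : ¬ j = i := fun h => h1 (by rw [h])
            rw [if_neg h1, if_pos h2, if_neg hji, if_pos h2, zero_add]
            have hratio : ε ^ (j:ℕ) / ε ^ (i:ℕ) = ε := by
              rw [← h2, pow_succ, mul_comm, mul_div_assoc, div_self (pow_ne_zero _ hεne),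
                mul_one]
            rw [hratio]
            have hjR1 : ((j:ℕ):ℝ) ≤ (R:ℝ) + 1 := by
              have := j.isLt; exact_mod_cast Nat.le_of_lt_succ (by omega)
            have : ((j:ℕ):ℝ) * d ≤ (R:ℝ) + 1 := by nlinarith
            nlinarith
          · have hji : ¬ j = i := fun h => h1 (by rw [h])
            rw [if_neg h1, if_neg h2, if_neg hji, if_neg h2, mul_zero]
            simp
      calc (∑ j : Fin (R+1), A i j)
          ≤ ∑ j : Fin (R+1), ((if j = i then c else 0)
              + (if (i:ℕ) + 1 = (j:ℕ) then ((R:ℝ)+1) * ε else 0)) :=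
            Finset.sum_le_sum (fun j _ => hg j)
        _ = (∑ j : Fin (R+1), (if j = i then c else 0))
              + (∑ j : Fin (R+1), (if (i:ℕ) + 1 = (j:ℕ) then ((R:ℝ)+1) * ε else 0)) :=
            Finset.sum_add_distrib
        _ ≤ c + ((R:ℝ)+1) * ε := by
            gcongr
            · simp
            · by_cases hiR : (i:ℕ) < R
              · have hj0 : ((⟨(i:ℕ)+1, by omega⟩ : Fin (R+1)) : ℕ) = (i:ℕ) + 1 := rfl
                have : (∑ j : Fin (R+1), (if (i:ℕ) + 1 = (j:ℕ) then ((R:ℝ)+1) * ε else 0))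
                    = ((R:ℝ)+1) * ε := by
                  rw [Finset.sum_eq_single (⟨(i:ℕ)+1, by omega⟩ : Fin (R+1))]
                  · rw [if_pos hj0.symm]
                  · intro k _ hk
                    apply if_neg
                    intro h
                    exact hk (Fin.ext (by omega))
                  · intro h; exact absurd (Finset.mem_univ _) h
                rw [this]
              · have : (∑ j : Fin (R+1), (if (i:ℕ) + 1 = (j:ℕ) then ((R:ℝ)+1) * ε else 0))
                    = 0 := by
                  apply Finset.sum_eq_zero
                  intro k _
                  apply if_neg
                  have := k.isLt
                  omega
                rw [this]
                positivity
    -- entrywise bound on A^n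
    have Abound : ∀ n : ℕ, ∀ i j : Fin (R+1), 0 ≤ (A ^ n) i j ∧ (A ^ n) i j ≤ c' ^ n := by
      intro n
      induction n with
      | zero =>
        intro i j
        constructor
        · by_cases h : i = j <;> simp [Matrix.one_apply, h]
        · by_cases h : i = j <;> simp [Matrix.one_apply, h]
      | succ n ih =>
        intro i j
        rw [pow_succ']
        rw [Matrix.mul_apply]
        constructor
        · apply Finset.sum_nonneg
          intro k _
          exact mul_nonneg (hAnn i k) (ih k j).1
        · calc (∑ k : Fin (R+1), A i k * (A ^ n) k j)
              ≤ ∑ k : Fin (R+1), A i k * c' ^ n := by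
                apply Finset.sum_le_sum
                intro k _
                exact mul_le_mul_of_nonneg_left (ih k j).2 (hAnn i k)
            _ = (∑ k : Fin (R+1), A i k) * c' ^ n := by rw [Finset.sum_mul]
            _ ≤ c' * c' ^ n := by
                apply mul_le_mul_of_nonneg_right (rowsum i) (by positivity)
            _ = c' ^ (n+1) := by rw [pow_succ']
    -- translate back to M0
    set K : ℝ := 1 / ε ^ R with hKdef
    have hM0bound : ∀ n : ℕ, 0 ≤ (M0 ^ n) i j ∧ (M0 ^ n) i j ≤ K * c' ^ n := by
      intro n
      have hconj := conj n i j
      have hratio0 : 0 < ε ^ (j:ℕ) / ε ^ (i:ℕ) := by positivity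
      have hMval : (M0 ^ n) i j = ε ^ (i:ℕ) / ε ^ (j:ℕ) * (A ^ n) i j := by
        rw [hconj]
        field_simp
      constructor
      · rw [hMval]
        exact mul_nonneg (by positivity) (Abound n i j).1
      · rw [hMval]
        have h1 : ε ^ (i:ℕ) ≤ 1 := pow_le_one₀ (le_of_lt hε0) hε1
        have h2 : ε ^ R ≤ ε ^ (j:ℕ) :=
          pow_le_pow_of_le_one (le_of_lt hε0) hε1 (Nat.le_of_lt_succ j.isLt)
        have h3 : ε ^ (i:ℕ) / ε ^ (j:ℕ) ≤ K := by
          rw [hKdef]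
          apply div_le_div₀ (by positivity) h1 (by positivity) h2
        exact mul_le_mul h3 (Abound n i j).2 (Abound n i j).1 (by positivity)
    have hlim : Tendsto (fun n : ℕ => K * c' ^ n) atTop (nhds 0) := by
      have := tendsto_pow_atTop_nhds_zero_of_lt_one hc'0 hc'1
      simpa using this.const_mul K
    exact squeeze_zero (fun n => (hM0bound n).1) (fun n => (hM0bound n).2) hlim
end

section
/- Let 0 < b < 1 and consider the mean matrix of the phenotypic model with R = 2 on the boundary d = 1 - b (so that c = 0), namely the 3×3 matrix M(b) with rows M(b) = [[0, 1-b, 0], [0, 0, 2(1-b)], [0, b, 2b]]. Then 1 is an eigenvalue of M(b) if and only if b = 1 - 1/√2 ≈ 0.2928. (Hence b_c(2) = 1 - 1/√2 is the b-coordinate of the intersection of the critical curve m = 1 with the boundary b + d = 1 of parameter space for R = 2.) -/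
/-- For `0 < b < 1`, consider the mean matrix of the phenotypic model with `R = 2` on the
boundary `d = 1 - b` (so `c = 0`).  Then `1` is an eigenvalue of `M(b)` if and only if
`b = 1 - 1/√2`; hence `b_c(2) = 1 - 1/√2` is the `b`-coordinate of the intersection of the
critical curve `m = 1` with the boundary `b + d = 1` of parameter space for `R = 2`. -/
theorem critical_b_R2 (b : ℝ) (hb0 : 0 < b) (hb1 : b < 1)
    (M : Matrix (Fin 3) (Fin 3) ℝ)
    (hM : M = !![0, 1 - b, 0; 0, 0, 2 * (1 - b); 0, b, 2 * b]) :
    (1 : ℝ) ∈ spectrum ℝ M ↔ b = 1 - 1 / Real.sqrt 2 := by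
  subst hM
  rw [spectrum.mem_iff, Matrix.isUnit_iff_isUnit_det, isUnit_iff_ne_zero, not_ne_iff]
  have h1 : (algebraMap ℝ (Matrix (Fin 3) (Fin 3) ℝ)) 1 = 1 := map_one _
  rw [h1]
  have hd : ((1 : Matrix (Fin 3) (Fin 3) ℝ)
      - !![0, 1 - b, 0; 0, 0, 2 * (1 - b); 0, b, 2 * b]).det = 2*b^2 - 4*b + 1 := by
    rw [Matrix.det_fin_three]
    simp [Matrix.sub_apply, Matrix.one_apply, Matrix.vecHead, Matrix.vecTail]
    ring
  rw [hd]
  have hs2 : Real.sqrt 2 ^ 2 = 2 := Real.sq_sqrt (by norm_num)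
  have hpos : (0:ℝ) < Real.sqrt 2 := by positivity
  have e2 : (1/Real.sqrt 2)^2 = 1/2 := by rw [div_pow, hs2]; norm_num
  constructor
  · intro h'
    have hf : (b - (1 - 1/Real.sqrt 2)) * (b - (1 + 1/Real.sqrt 2)) = 0 := by
      have e : (b - (1 - 1/Real.sqrt 2)) * (b - (1 + 1/Real.sqrt 2))
          = b^2 - 2*b + 1 - (1/Real.sqrt 2)^2 := by ring
      rw [e, e2]; linarith
    rcases mul_eq_zero.mp hf with h'' | h''
    · linarith
    · exfalso
      have : (0:ℝ) < 1/Real.sqrt 2 := by positivity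
      linarith
  · intro h
    subst h
    nlinarith [e2]
end
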